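/- arXiv:2101.03698 — 4 statements merged into one kernel-verified Lean document; each statement's English description precedes it below -/
import Mathlib

section
/- Let D ⊆ ℝ^d be a measurable set, let z : ℝ^d → ℝ^p be measurable with |z_i(u)| ≤ κ for all i and all u ∈ D, and let β, β′ ∈ ℝ^p be such that ∫_D max(exp(βᵀ z(u)), exp(β′ᵀ z(u))) du < ∞. Define A(β) = ∫_D z(u) z(u)ᵀ exp(βᵀ z(u)) du. Then for all φ, ψ ∈ ℝ^p, |φᵀ (A(β) − A(β′)) ψ| ≤ κ³ p^{3/2} ‖β − β′‖ ‖φ‖ ‖ψ‖ ∫_D max(exp(βᵀ z(u)), exp(β′ᵀ z(u))) du. -/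
open MeasureTheory

lemma exp_diff_le (a b : ℝ) :
    |Real.exp a - Real.exp b| ≤ |a - b| * max (Real.exp a) (Real.exp b) := by
  wlog h : b ≤ a
  · have := this b a (le_of_not_ge h)
    rwa [abs_sub_comm, abs_sub_comm b a, max_comm] at this
  rw [abs_of_nonneg (sub_nonneg.2 (Real.exp_le_exp.2 h)), abs_of_nonneg (sub_nonneg.2 h)]
  have h1 := Real.add_one_le_exp (b - a)
  have h2 : Real.exp (b - a) * Real.exp a = Real.exp b := by
    rw [← Real.exp_add]; ring_nf
  have key : Real.exp a - Real.exp b ≤ (a - b) * Real.exp a := by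
    nlinarith [Real.exp_pos a, Real.exp_pos b]
  calc Real.exp a - Real.exp b ≤ (a - b) * Real.exp a := key
    _ ≤ (a - b) * max (Real.exp a) (Real.exp b) :=
      mul_le_mul_of_nonneg_left (le_max_left _ _) (sub_nonneg.2 h)

lemma sum_abs_le_sqrt (p : ℕ) (v : EuclideanSpace ℝ (Fin p)) :
    ∑ i, |v i| ≤ Real.sqrt p * ‖v‖ := by
  rw [EuclideanSpace.norm_eq]
  have h1 : (∑ i, |v i|) ^ 2 ≤ (p : ℝ) * ∑ i, |v i| ^ 2 := by
    simpa using sq_sum_le_card_mul_sum_sq (s := Finset.univ) (f := fun i => |v i|)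
  have h2 : (∑ i, |v i|) = Real.sqrt ((∑ i, |v i|) ^ 2) :=
    (Real.sqrt_sq (Finset.sum_nonneg fun i _ => abs_nonneg _)).symm
  rw [h2, ← Real.sqrt_mul (by positivity)]
  apply Real.sqrt_le_sqrt
  simpa [sq_abs] using h1

/-- Lipschitz-type bound on the sensitivity matrix (Lemma C.3(ii)): for bounded
covariates, `|φᵀ (A(β) − A(β′)) ψ| ≤ κ³ p^{3/2} ‖β − β′‖ ‖φ‖ ‖ψ‖ ∫_D max(ρ(u;β), ρ(u;β′)) du`. -/
theorem stmt_4 {d p : ℕ} (κ : ℝ)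
    (D : Set (Fin d → ℝ)) (hD : MeasurableSet D)
    (z : (Fin d → ℝ) → Fin p → ℝ) (hz : Measurable z)
    (hbound : ∀ u ∈ D, ∀ i, |z u i| ≤ κ)
    (β β' : EuclideanSpace ℝ (Fin p))
    (hint : IntegrableOn
      (fun u => max (Real.exp (∑ i, β i * z u i)) (Real.exp (∑ i, β' i * z u i))) D)
    (A A' : Matrix (Fin p) (Fin p) ℝ)
    (hA : ∀ i j, A i j = ∫ u in D, z u i * z u j * Real.exp (∑ k, β k * z u k))
    (hA' : ∀ i j, A' i j = ∫ u in D, z u i * z u j * Real.exp (∑ k, β' k * z u k)) :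
    ∀ φ ψ : EuclideanSpace ℝ (Fin p),
      |∑ i, ∑ j, φ i * (A i j - A' i j) * ψ j| ≤
        κ ^ 3 * (p : ℝ) ^ ((3 : ℝ) / 2) * ‖β - β'‖ * ‖φ‖ * ‖ψ‖ *
          ∫ u in D, max (Real.exp (∑ i, β i * z u i)) (Real.exp (∑ i, β' i * z u i)) := by
  intro φ ψ
  by_cases hκ : 0 ≤ κ
  · -- main case
    set f : (Fin d → ℝ) → ℝ := fun u => Real.exp (∑ i, β i * z u i) with hf
    set g : (Fin d → ℝ) → ℝ := fun u => Real.exp (∑ i, β' i * z u i) with hg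
    set M : (Fin d → ℝ) → ℝ := fun u => max (f u) (g u) with hM
    set I : ℝ := ∫ u in D, M u with hI
    have hI0 : 0 ≤ I := by
      apply setIntegral_nonneg hD
      intro u _
      exact le_trans (Real.exp_pos _).le (le_max_left _ _)
    -- measurability
    have hzm : ∀ i, Measurable fun u => z u i := fun i => (measurable_pi_apply i).comp hz
    have hfm : Measurable f := by
      apply Real.measurable_exp.comp
      exact Finset.measurable_sum _ fun k _ => (hzm k).const_mul _
    have hgm : Measurable g := by
      apply Real.measurable_exp.comp
      exact Finset.measurable_sum _ fun k _ => (hzm k).const_mul _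
    -- integrability of entries
    have hIe : ∀ (γ : EuclideanSpace ℝ (Fin p)) (h : (fun u => Real.exp (∑ k, γ k * z u k)) = f ∨
        (fun u => Real.exp (∑ k, γ k * z u k)) = g) (i j : Fin p),
        IntegrableOn (fun u => z u i * z u j * Real.exp (∑ k, γ k * z u k)) D := by
      intro γ h i j
      apply Integrable.mono' (hint.const_mul (κ ^ 2))
      · refine (((hzm i).mul (hzm j)).mul ?_).aestronglyMeasurable
        rcases h with h | h <;> rw [h]
        exacts [hfm, hgm]
      · refine ae_restrict_of_forall_mem hD fun u hu => ?_
        have h1 := hbound u hu i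
        have h2 := hbound u hu j
        have h3 : Real.exp (∑ k, γ k * z u k) ≤ M u := by
          rcases h with h | h
          · rw [show Real.exp (∑ k, γ k * z u k) = f u from congrFun h u]
            exact le_max_left _ _
          · rw [show Real.exp (∑ k, γ k * z u k) = g u from congrFun h u]
            exact le_max_right _ _
        have hexp : 0 < Real.exp (∑ k, γ k * z u k) := Real.exp_pos _
        have : |z u i * z u j * Real.exp (∑ k, γ k * z u k)|
            ≤ κ ^ 2 * Real.exp (∑ k, γ k * z u k) := by
          rw [abs_mul, abs_mul, abs_of_pos hexp]
          have := mul_le_mul h1 h2 (abs_nonneg _) hκ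
          nlinarith
        calc ‖z u i * z u j * Real.exp (∑ k, γ k * z u k)‖
            ≤ κ ^ 2 * Real.exp (∑ k, γ k * z u k) := this
          _ ≤ κ ^ 2 * M u := by nlinarith
    have hIf : ∀ i j, IntegrableOn (fun u => z u i * z u j * f u) D :=
      hIe β (Or.inl rfl)
    have hIg : ∀ i j, IntegrableOn (fun u => z u i * z u j * g u) D :=
      hIe β' (Or.inr rfl)
    -- pointwise Lipschitz bound on the exponential difference
    have hL : ∀ u ∈ D, |f u - g u| ≤ κ * Real.sqrt p * ‖β - β'‖ * M u := by
      intro u hu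
      have h1 := exp_diff_le (∑ i, β i * z u i) (∑ i, β' i * z u i)
      have h2 : |(∑ i, β i * z u i) - ∑ i, β' i * z u i| ≤ κ * Real.sqrt p * ‖β - β'‖ := by
        rw [← Finset.sum_sub_distrib]
        calc |∑ i, (β i * z u i - β' i * z u i)| ≤ ∑ i, |β i * z u i - β' i * z u i| :=
              Finset.abs_sum_le_sum_abs _ _
          _ ≤ ∑ i, |β i - β' i| * κ := by
              apply Finset.sum_le_sum
              intro i _
              rw [show β i * z u i - β' i * z u i = (β i - β' i) * z u i by ring, abs_mul]
              exact mul_le_mul_of_nonneg_left (hbound u hu i) (abs_nonneg _)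
          _ = κ * ∑ i, |(β - β') i| := by
              rw [← Finset.sum_mul, mul_comm]
              simp only [PiLp.sub_apply]
          _ ≤ κ * (Real.sqrt p * ‖β - β'‖) :=
              mul_le_mul_of_nonneg_left (sum_abs_le_sqrt p (β - β')) hκ
          _ = κ * Real.sqrt p * ‖β - β'‖ := by ring
      have hM0 : 0 ≤ M u := le_trans (Real.exp_pos _).le (le_max_left _ _)
      calc |f u - g u| ≤ |(∑ i, β i * z u i) - ∑ i, β' i * z u i| * M u := h1
        _ ≤ κ * Real.sqrt p * ‖β - β'‖ * M u :=
            mul_le_mul_of_nonneg_right h2 hM0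
    -- entrywise bound
    set C : ℝ := κ ^ 3 * Real.sqrt p * ‖β - β'‖ * I with hC
    have hC0 : 0 ≤ C := by
      have := Real.sqrt_nonneg (p : ℝ)
      positivity
    have hΔ : ∀ i j, |A i j - A' i j| ≤ C := by
      intro i j
      rw [hA, hA', ← integral_sub (hIf i j) (hIg i j)]
      have heq : ∀ u, z u i * z u j * f u - z u i * z u j * g u
          = z u i * z u j * (f u - g u) := fun u => by ring
      calc |∫ u in D, (z u i * z u j * f u - z u i * z u j * g u)|
          ≤ ∫ u in D, |z u i * z u j * f u - z u i * z u j * g u| :=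
            by simpa [Real.norm_eq_abs] using
              norm_integral_le_integral_norm
                (fun u => z u i * z u j * f u - z u i * z u j * g u) (μ := volume.restrict D)
        _ ≤ ∫ u in D, κ ^ 3 * Real.sqrt p * ‖β - β'‖ * M u := by
            apply setIntegral_mono_on
            · exact ((hIf i j).sub (hIg i j)).abs
            · exact hint.const_mul _
            · exact hD
            · intro u hu
              rw [heq u, abs_mul, abs_mul]
              have h1 := hbound u hu i
              have h2 := hbound u hu j
              have h3 := hL u hu
              have hM0 : 0 ≤ M u := le_trans (Real.exp_pos _).le (le_max_left _ _)
              have hsq : Real.sqrt p ≥ 0 := Real.sqrt_nonneg _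
              have hn : (0:ℝ) ≤ ‖β - β'‖ := norm_nonneg _
              nlinarith [abs_nonneg (z u i), abs_nonneg (z u j), abs_nonneg (f u - g u),
                mul_le_mul h1 h2 (abs_nonneg _) hκ]
        _ = C := by rw [hC, hI, ← integral_const_mul]
    -- sum up
    have hsum : |∑ i, ∑ j, φ i * (A i j - A' i j) * ψ j|
        ≤ C * (∑ i, |φ i|) * (∑ j, |ψ j|) := by
      calc |∑ i, ∑ j, φ i * (A i j - A' i j) * ψ j|
          ≤ ∑ i, ∑ j, |φ i * (A i j - A' i j) * ψ j| := by
            refine le_trans (Finset.abs_sum_le_sum_abs _ _) (Finset.sum_le_sum fun i _ => ?_)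
            exact Finset.abs_sum_le_sum_abs _ _
        _ ≤ ∑ i, ∑ j, |φ i| * C * |ψ j| := by
            apply Finset.sum_le_sum; intro i _
            apply Finset.sum_le_sum; intro j _
            rw [abs_mul, abs_mul]
            exact mul_le_mul (mul_le_mul_of_nonneg_left (hΔ i j) (abs_nonneg _)) le_rfl
              (abs_nonneg _) (by positivity)
        _ = C * (∑ i, |φ i|) * (∑ j, |ψ j|) := by
            rw [Finset.sum_comm]
            simp_rw [← Finset.sum_mul, ← Finset.mul_sum]
            ring
    have hφ := sum_abs_le_sqrt p φ
    have hψ := sum_abs_le_sqrt p ψ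
    have hφ0 : 0 ≤ ∑ i, |φ i| := Finset.sum_nonneg fun i _ => abs_nonneg _
    have hψ0 : 0 ≤ ∑ j, |ψ j| := Finset.sum_nonneg fun j _ => abs_nonneg _
    have hfinal : C * (∑ i, |φ i|) * (∑ j, |ψ j|)
        ≤ C * (Real.sqrt p * ‖φ‖) * (Real.sqrt p * ‖ψ‖) := by
      apply mul_le_mul
      · exact mul_le_mul_of_nonneg_left hφ hC0
      · exact hψ
      · exact hψ0
      · positivity
    have hrw : κ ^ 3 * (p : ℝ) ^ ((3 : ℝ) / 2) * ‖β - β'‖ * ‖φ‖ * ‖ψ‖ * I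
        = C * (Real.sqrt p * ‖φ‖) * (Real.sqrt p * ‖ψ‖) := by
      have : (p : ℝ) ^ ((3 : ℝ) / 2) = Real.sqrt p ^ 3 := by
        rw [Real.sqrt_eq_rpow, ← Real.rpow_natCast ((p:ℝ) ^ ((1:ℝ)/2)) 3,
          ← Real.rpow_mul (Nat.cast_nonneg p)]
        norm_num
      rw [this, hC]; ring
    calc |∑ i, ∑ j, φ i * (A i j - A' i j) * ψ j|
        ≤ C * (∑ i, |φ i|) * (∑ j, |ψ j|) := hsum
      _ ≤ C * (Real.sqrt p * ‖φ‖) * (Real.sqrt p * ‖ψ‖) := hfinal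
      _ = κ ^ 3 * (p : ℝ) ^ ((3 : ℝ) / 2) * ‖β - β'‖ * ‖φ‖ * ‖ψ‖ * I := hrw.symm
  · -- κ < 0: then p = 0 or D = ∅
    push_neg at hκ
    rcases Nat.eq_zero_or_pos p with hp | hp
    · subst hp
      simp
    · have hDe : D = ∅ := by
        by_contra h
        obtain ⟨u, hu⟩ := Set.nonempty_iff_ne_empty.2 h
        have := hbound u hu ⟨0, hp⟩
        have := abs_nonneg (z u ⟨0, hp⟩)
        linarith
      subst hDe
      simp only [Measure.restrict_empty, integral_zero_measure] at hA hA' ⊢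
      simp [hA, hA']
end

section
/- Let p ∈ ℕ, let Λ be the p×p diagonal matrix with diagonal entries λ₁,…,λ_p > 0, let μ > 0, let U, β̃ ∈ ℝ^p and let A be a p×p real matrix. Define K = { β ∈ ℝ^p : ‖Λ⁻¹(U + A(β̃ − β))‖_∞ ≤ μ }. Suppose β̂ ∈ ℝ^p and γ̂ ∈ ℝ^p satisfy: (i) β̂ ∈ K; (ii) ‖Λ⁻¹Aᵀ Λ⁻¹ γ̂‖_∞ ≤ μ; (iii) γ̂ᵀ Λ⁻¹ A β̂ = μ ‖Λβ̂‖₁; (iv) γ̂ᵀ Λ⁻¹ (U + A(β̃ − β̂)) = μ ‖γ̂‖₁. Then β̂ is optimal for the primal problem: ‖Λβ̂‖₁ ≤ ‖Λβ‖₁ for every β ∈ K. -/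
open Matrix

/-- Hölder-type bound: if every entry of `y` is bounded by `μ`, then `x ⬝ᵥ y ≤ μ * ‖x‖₁`. -/
lemma holder_aux {p : ℕ} {μ : ℝ} (x y : Fin p → ℝ) (h : ∀ j, |y j| ≤ μ) :
    x ⬝ᵥ y ≤ μ * ∑ j, |x j| := by
  rw [dotProduct, Finset.mul_sum]
  refine Finset.sum_le_sum fun j _ => ?_
  calc x j * y j ≤ |x j * y j| := le_abs_self _
    _ = |x j| * |y j| := abs_mul _ _
    _ ≤ |x j| * μ := mul_le_mul_of_nonneg_left (h j) (abs_nonneg _)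
    _ = μ * |x j| := mul_comm _ _

/-- Transposition identity used in the proof. -/
lemma swap_aux {p : ℕ} (lam : Fin p → ℝ) (hlam : ∀ j, 0 < lam j)
    (A : Matrix (Fin p) (Fin p) ℝ) (γh β : Fin p → ℝ) :
    γh ⬝ᵥ ((Matrix.diagonal fun j => (lam j)⁻¹) *ᵥ (A *ᵥ β)) =
      ∑ j, (lam j * β j) *
        (((Matrix.diagonal fun j => (lam j)⁻¹) * Aᵀ *
          (Matrix.diagonal fun j => (lam j)⁻¹)) *ᵥ γh) j := by
  have hR : ∀ j, (((Matrix.diagonal fun j => (lam j)⁻¹) * Aᵀ *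
      (Matrix.diagonal fun j => (lam j)⁻¹)) *ᵥ γh) j
      = (lam j)⁻¹ * ∑ i, A i j * ((lam i)⁻¹ * γh i) := by
    intro j
    rw [← Matrix.mulVec_mulVec, ← Matrix.mulVec_mulVec, Matrix.mulVec_diagonal]
    congr 1
    simp [Matrix.mulVec, dotProduct, Matrix.diagonal_apply, ite_mul,
      Finset.sum_ite_eq, Matrix.transpose_apply]
  have hL : γh ⬝ᵥ ((Matrix.diagonal fun j => (lam j)⁻¹) *ᵥ (A *ᵥ β)) =
      ∑ i, ∑ j, γh i * ((lam i)⁻¹ * (A i j * β j)) := by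
    simp only [dotProduct, Matrix.mulVec_diagonal]
    simp only [Matrix.mulVec, dotProduct, Finset.mul_sum]
  rw [hL, Finset.sum_comm]
  refine Finset.sum_congr rfl fun j _ => ?_
  rw [hR, Finset.mul_sum, Finset.mul_sum]
  refine Finset.sum_congr rfl fun i _ => ?_
  have hj := (hlam j).ne'
  have h1 : lam j * (lam j)⁻¹ = 1 := mul_inv_cancel₀ hj
  linear_combination (-(β j * A i j * (lam i)⁻¹ * γh i)) * h1

/-- KKT sufficiency for the ALDS problem (Lemma C.2): if `β̂` is primal feasible, `γ̂` is
dual feasible, and the two complementary-slackness identities hold, then `β̂` is optimal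
for `min ‖Λβ‖₁ subject to ‖Λ⁻¹(U + A(β̃ − β))‖_∞ ≤ μ`. -/
theorem stmt_9 (p : ℕ) (lam : Fin p → ℝ) (hlam : ∀ j, 0 < lam j)
    (μ : ℝ) (hμ : 0 < μ) (U βt : Fin p → ℝ)
    (A : Matrix (Fin p) (Fin p) ℝ) (βh γh : Fin p → ℝ)
    (hfea1 : ∀ j, |((Matrix.diagonal fun j => (lam j)⁻¹) *ᵥ (U + A *ᵥ (βt - βh))) j| ≤ μ)
    (hfea2 : ∀ j, |(((Matrix.diagonal fun j => (lam j)⁻¹) * Aᵀ *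
        (Matrix.diagonal fun j => (lam j)⁻¹)) *ᵥ γh) j| ≤ μ)
    (hslack1 : γh ⬝ᵥ ((Matrix.diagonal fun j => (lam j)⁻¹) *ᵥ (A *ᵥ βh)) =
      μ * ∑ j, |(Matrix.diagonal lam *ᵥ βh) j|)
    (hslack2 : γh ⬝ᵥ ((Matrix.diagonal fun j => (lam j)⁻¹) *ᵥ (U + A *ᵥ (βt - βh))) =
      μ * ∑ j, |γh j|) :
    ∀ β : Fin p → ℝ,
      (∀ j, |((Matrix.diagonal fun j => (lam j)⁻¹) *ᵥ (U + A *ᵥ (βt - β))) j| ≤ μ) →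
      ∑ j, |(Matrix.diagonal lam *ᵥ βh) j| ≤ ∑ j, |(Matrix.diagonal lam *ᵥ β) j| := by
  intro β hβ
  set D : Matrix (Fin p) (Fin p) ℝ := Matrix.diagonal fun j => (lam j)⁻¹ with hD
  -- linearity: split D *ᵥ (U + A *ᵥ (βt - x))
  have hsplit : ∀ x : Fin p → ℝ,
      γh ⬝ᵥ (D *ᵥ (U + A *ᵥ (βt - x))) =
        γh ⬝ᵥ (D *ᵥ (U + A *ᵥ βt)) - γh ⬝ᵥ (D *ᵥ (A *ᵥ x)) := by
    intro x
    simp only [Matrix.mulVec_sub, Matrix.mulVec_add, dotProduct_add,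
      dotProduct_sub]
    ring  -- from Hölder on feasible β
  have h1 : γh ⬝ᵥ (D *ᵥ (U + A *ᵥ (βt - β))) ≤ μ * ∑ j, |γh j| :=
    holder_aux γh _ (hβ)
  have h2 : γh ⬝ᵥ (D *ᵥ (A *ᵥ βh)) ≤ γh ⬝ᵥ (D *ᵥ (A *ᵥ β)) := by
    have := hslack2
    rw [hsplit βh] at this
    rw [hsplit β] at h1
    linarith
  -- upper bound γh ⬝ᵥ D A β by μ ‖Λβ‖₁
  have h3 : γh ⬝ᵥ (D *ᵥ (A *ᵥ β)) ≤ μ * ∑ j, |(Matrix.diagonal lam *ᵥ β) j| := by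
    rw [swap_aux lam hlam A γh β]
    have habs : ∀ j, |(Matrix.diagonal lam *ᵥ β) j| = |lam j * β j| := by
      intro j; simp [Matrix.mulVec_diagonal]
    calc ∑ j, (lam j * β j) * ((D * Aᵀ * D) *ᵥ γh) j
        ≤ μ * ∑ j, |lam j * β j| :=
          holder_aux (fun j => lam j * β j) _ hfea2
      _ = μ * ∑ j, |(Matrix.diagonal lam *ᵥ β) j| := by
          congr 1; exact Finset.sum_congr rfl fun j _ => (habs j).symm
  have : μ * ∑ j, |(Matrix.diagonal lam *ᵥ βh) j| ≤
      μ * ∑ j, |(Matrix.diagonal lam *ᵥ β) j| := by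
    calc μ * ∑ j, |(Matrix.diagonal lam *ᵥ βh) j| = γh ⬝ᵥ (D *ᵥ (A *ᵥ βh)) := hslack1.symm
      _ ≤ γh ⬝ᵥ (D *ᵥ (A *ᵥ β)) := h2
      _ ≤ μ * ∑ j, |(Matrix.diagonal lam *ᵥ β) j| := h3
  exact le_of_mul_le_mul_left this hμ
end

section
/- Let p ∈ ℕ, 1 ≤ s ≤ p, let Λ be the p×p diagonal matrix with diagonal entries λ₁,…,λ_p > 0 and let Λ₁₁ be its top-left s×s block. Let μ > 0, U, β̃ ∈ ℝ^p, and let A be a symmetric p×p real matrix whose top-left s×s block A₁₁ is invertible. Write v = U + Aβ̃ and let v₁ ∈ ℝ^s be its first s coordinates. Suppose β̂ = (β̂₁ᵀ, 0ᵀ)ᵀ and γ̂ = (γ̂₁ᵀ, 0ᵀ)ᵀ with β̂₁, γ̂₁ ∈ ℝ^s satisfying β̂₁ = A₁₁⁻¹(v₁ − μ Λ₁₁ sign(γ̂₁)) and γ̂₁ = μ Λ₁₁ A₁₁⁻¹ Λ₁₁ sign(β̂₁), where sign is applied componentwise with sign(0) = 0. Then the complementary slackness identities hold: γ̂ᵀ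 Λ⁻¹ A β̂ = μ ‖Λβ̂‖₁ and γ̂ᵀ Λ⁻¹ (U + A(β̃ − β̂)) = μ ‖γ̂‖₁. -/
/-!
Both candidates vanish off the first `s` coordinates, so both identities reduce to the active
block `B = A₁₁`, `D = Λ₁₁`. There, symmetry of `B` gives
`γ̂₁ᵀ D⁻¹ B β̂₁ = μ sign(β̂₁)ᵀ D B⁻¹ B β̂₁ = μ Σ λᵢ |β̂ᵢ|`, and the defining equation of `β̂₁`
says the residual `v₁ - B β̂₁` equals `μ D sign(γ̂₁)`, whence
`γ̂₁ᵀ D⁻¹ (v₁ - B β̂₁) = μ Σ |γ̂ᵢ|`; both use `sign x * x = |x|`.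
-/

open Matrix

theorem Real.sign_mul_self_eq_abs (x : ℝ) : Real.sign x * x = |x| := by
  rcases lt_trichotomy x 0 with h | rfl | h
  · rw [Real.sign_of_neg h, abs_of_neg h, neg_one_mul]
  · rw [mul_zero, abs_zero]
  · rw [Real.sign_of_pos h, abs_of_pos h, one_mul]

section Padding

variable {R : Type*} {s p : ℕ}

/-- The vector `(xᵀ, 0ᵀ)ᵀ` of length `p`. -/
def padZero [Zero R] (p : ℕ) (x : Fin s → R) : Fin p → R :=
  fun j => if h : (j : ℕ) < s then x ⟨j, h⟩ else 0

theorem padZero_castLE [Zero R] (hsp : s ≤ p) (x : Fin s → R) (i : Fin s) :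
    padZero p x (Fin.castLE hsp i) = x i :=
  dif_pos i.isLt

theorem padZero_of_le [Zero R] (x : Fin s → R) {j : Fin p} (hj : s ≤ j) :
    padZero p x j = 0 :=
  dif_neg hj.not_gt

theorem sum_apply_padZero [Zero R] {M : Type*} [AddCommMonoid M] (hsp : s ≤ p)
    (x : Fin s → R) (g : Fin p → R → M) (hg : ∀ j, g j 0 = 0) :
    ∑ j, g j (padZero p x j) = ∑ i, g (Fin.castLE hsp i) (x i) := by
  refine (Fintype.sum_of_injective _ (Fin.castLE_injective hsp) _ _ (fun j hj => ?_)
    fun i => by rw [padZero_castLE]).symm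
  have hsj : s ≤ j := not_lt.mp fun hjs => hj ⟨⟨j, hjs⟩, rfl⟩
  rw [padZero_of_le x hsj, hg]

theorem sum_abs_padZero [Lattice R] [AddCommGroup R] [AddLeftMono R] (hsp : s ≤ p)
    (x : Fin s → R) :
    ∑ j, |padZero p x j| = ∑ i, |x i| :=
  sum_apply_padZero hsp x (fun _ a => |a|) fun _ => abs_zero

theorem padZero_dotProduct [NonUnitalNonAssocSemiring R] (hsp : s ≤ p) (x : Fin s → R)
    (y : Fin p → R) : padZero p x ⬝ᵥ y = x ⬝ᵥ fun i => y (Fin.castLE hsp i) :=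
  sum_apply_padZero hsp x (fun j a => a * y j) fun _ => zero_mul _

theorem mulVec_padZero [NonUnitalCommSemiring R] {m : Type*} (hsp : s ≤ p)
    (A : Matrix m (Fin p) R) (x : Fin s → R) :
    A *ᵥ padZero p x = A.submatrix id (Fin.castLE hsp) *ᵥ x := by
  ext i
  rw [mulVec, dotProduct_comm, padZero_dotProduct, dotProduct_comm]
  rfl

theorem diagonal_mulVec_padZero [NonUnitalNonAssocSemiring R] (hsp : s ≤ p) (d : Fin p → R)
    (x : Fin s → R) :
    diagonal d *ᵥ padZero p x = padZero p (diagonal (fun i => d (Fin.castLE hsp i)) *ᵥ x) := by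
  ext j
  rw [mulVec_diagonal]
  by_cases hj : (j : ℕ) < s
  · obtain ⟨i, rfl⟩ : ∃ i : Fin s, Fin.castLE hsp i = j := ⟨⟨j, hj⟩, rfl⟩
    rw [padZero_castLE, padZero_castLE, mulVec_diagonal]
  · rw [padZero_of_le _ (not_lt.mp hj), padZero_of_le _ (not_lt.mp hj), mul_zero]

end Padding

theorem diagonal_mulVec_comp {R m n : Type*} [NonUnitalNonAssocSemiring R] [Fintype m]
    [Fintype n] [DecidableEq m] [DecidableEq n] (d y : n → R) (e : m → n) :
    (fun i => (diagonal d *ᵥ y) (e i)) = diagonal (fun i => d (e i)) *ᵥ fun i => y (e i) := by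
  ext i
  simp only [mulVec_diagonal]

section BlockIdentities

variable {n : Type*} [Fintype n] [DecidableEq n]

theorem diagonal_inv_mul_diagonal {d : n → ℝ} (hd : ∀ i, d i ≠ 0) :
    diagonal (fun i => (d i)⁻¹) * diagonal d = 1 := by
  rw [diagonal_mul_diagonal, ← diagonal_one]
  exact congrArg diagonal (funext fun i => inv_mul_cancel₀ (hd i))

theorem diagonal_mul_diagonal_inv {d : n → ℝ} (hd : ∀ i, d i ≠ 0) :
    diagonal d * diagonal (fun i => (d i)⁻¹) = 1 := by
  rw [diagonal_mul_diagonal, ← diagonal_one]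
  exact congrArg diagonal (funext fun i => mul_inv_cancel₀ (hd i))

theorem dotProduct_sign_diagonal_mulVec (d : n → ℝ) (hd : ∀ i, 0 ≤ d i) (β : n → ℝ) :
    (fun i => Real.sign (β i)) ⬝ᵥ (diagonal d *ᵥ β) = ∑ i, |(diagonal d *ᵥ β) i| := by
  refine Finset.sum_congr rfl fun i _ => ?_
  rw [mulVec_diagonal, abs_mul, abs_of_nonneg (hd i), ← Real.sign_mul_self_eq_abs]
  ring

/-- Condition (C.12) on the active block `B = A₁₁`, `D = Λ₁₁`. -/
theorem dotProduct_diagonal_inv_mulVec_mulVec_of_eq_smul_sign {d : n → ℝ} (hd : ∀ i, 0 < d i)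
    {B : Matrix n n ℝ} (hB : B.IsSymm) (hBdet : IsUnit B.det) {μ : ℝ} {β γ : n → ℝ}
    (hγ : γ = μ • ((diagonal d * B⁻¹ * diagonal d) *ᵥ fun i => Real.sign (β i))) :
    γ ⬝ᵥ (diagonal (fun i => (d i)⁻¹) *ᵥ (B *ᵥ β)) = μ * ∑ i, |(diagonal d *ᵥ β) i| := by
  have hsymm : (diagonal d * B⁻¹ * diagonal d)ᵀ = diagonal d * B⁻¹ * diagonal d := by
    rw [transpose_mul, transpose_mul, diagonal_transpose, transpose_nonsing_inv, hB.eq,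
      Matrix.mul_assoc]
  have hcancel : diagonal d * B⁻¹ * diagonal d * diagonal (fun i => (d i)⁻¹) * B = diagonal d := by
    rw [Matrix.mul_assoc _ (diagonal d), diagonal_mul_diagonal_inv fun i => (hd i).ne',
      Matrix.mul_one, Matrix.mul_assoc, nonsing_inv_mul _ hBdet, Matrix.mul_one]
  rw [hγ, smul_dotProduct, ← hsymm, mulVec_transpose, ← dotProduct_mulVec,
    mulVec_mulVec, mulVec_mulVec, hcancel,
    dotProduct_sign_diagonal_mulVec d (fun i => (hd i).le), smul_eq_mul]

/-- Condition (C.13) on the active block `B = A₁₁`, `D = Λ₁₁`. -/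
theorem dotProduct_diagonal_inv_mulVec_sub_of_eq_inv_mulVec {d : n → ℝ} (hd : ∀ i, d i ≠ 0)
    {B : Matrix n n ℝ} (hBdet : IsUnit B.det) {μ : ℝ} {v β γ : n → ℝ}
    (hβ : β = B⁻¹ *ᵥ (v - μ • (diagonal d *ᵥ fun i => Real.sign (γ i)))) :
    γ ⬝ᵥ (diagonal (fun i => (d i)⁻¹) *ᵥ (v - B *ᵥ β)) = μ * ∑ i, |γ i| := by
  have hres : v - B *ᵥ β = μ • (diagonal d *ᵥ fun i => Real.sign (γ i)) := by
    rw [hβ, mulVec_mulVec, mul_nonsing_inv _ hBdet, one_mulVec, sub_sub_cancel]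
  rw [hres, mulVec_smul, mulVec_mulVec, diagonal_inv_mul_diagonal hd, one_mulVec,
    dotProduct_smul, smul_eq_mul]
  congr 1
  exact Finset.sum_congr rfl fun i _ => by rw [mul_comm, Real.sign_mul_self_eq_abs]

end BlockIdentities

theorem stmt_10_general (p s : ℕ) (hsp : s ≤ p)
    (lam : Fin p → ℝ) (hlam : ∀ j, 0 < lam j)
    (μ : ℝ) (U βt : Fin p → ℝ)
    (A : Matrix (Fin p) (Fin p) ℝ) (hAsymm : A.IsSymm)
    (hA11 : IsUnit (A.submatrix (Fin.castLE hsp) (Fin.castLE hsp)).det)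
    (β1 γ1 : Fin s → ℝ)
    (hβ1 : β1 = (A.submatrix (Fin.castLE hsp) (Fin.castLE hsp))⁻¹ *ᵥ
      ((fun i => (U + A *ᵥ βt) (Fin.castLE hsp i)) -
        μ • (Matrix.diagonal (fun i => lam (Fin.castLE hsp i)) *ᵥ
          fun i => Real.sign (γ1 i))))
    (hγ1 : γ1 = μ • ((Matrix.diagonal (fun i => lam (Fin.castLE hsp i)) *
        (A.submatrix (Fin.castLE hsp) (Fin.castLE hsp))⁻¹ *
        Matrix.diagonal (fun i => lam (Fin.castLE hsp i))) *ᵥ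
          fun i => Real.sign (β1 i)))
    (βh γh : Fin p → ℝ)
    (hβh : βh = fun j : Fin p => if h : (j : ℕ) < s then β1 ⟨j, h⟩ else 0)
    (hγh : γh = fun j : Fin p => if h : (j : ℕ) < s then γ1 ⟨j, h⟩ else 0) :
    γh ⬝ᵥ ((Matrix.diagonal fun j => (lam j)⁻¹) *ᵥ (A *ᵥ βh)) =
      μ * ∑ j, |(Matrix.diagonal lam *ᵥ βh) j| ∧
    γh ⬝ᵥ ((Matrix.diagonal fun j => (lam j)⁻¹) *ᵥ (U + A *ᵥ (βt - βh))) =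
      μ * ∑ j, |γh j| := by
  replace hβh : βh = padZero p β1 := hβh
  replace hγh : γh = padZero p γ1 := hγh
  subst hβh hγh
  have hAβ : (fun i => (A *ᵥ padZero p β1) (Fin.castLE hsp i)) =
      A.submatrix (Fin.castLE hsp) (Fin.castLE hsp) *ᵥ β1 := by
    rw [mulVec_padZero hsp]
    rfl
  constructor
  · rw [padZero_dotProduct hsp, diagonal_mulVec_comp, hAβ, diagonal_mulVec_padZero hsp,
      sum_abs_padZero hsp]
    exact dotProduct_diagonal_inv_mulVec_mulVec_of_eq_smul_sign (fun i => hlam _)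
      (hAsymm.submatrix _) hA11 hγ1
  · have hres : (fun i => (U + A *ᵥ (βt - padZero p β1)) (Fin.castLE hsp i)) =
        (fun i => (U + A *ᵥ βt) (Fin.castLE hsp i)) -
          A.submatrix (Fin.castLE hsp) (Fin.castLE hsp) *ᵥ β1 := by
      rw [← hAβ, mulVec_sub]
      ext i
      simp only [Pi.add_apply, Pi.sub_apply]
      ring
    rw [padZero_dotProduct hsp, diagonal_mulVec_comp, hres, sum_abs_padZero hsp]
    exact dotProduct_diagonal_inv_mulVec_sub_of_eq_inv_mulVec (fun i => (hlam _).ne') hA11 hβ1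

/-- Verification of the complementary slackness identities for the candidate primal/dual
solutions of Lemma C.4 of the paper: with `A` symmetric, `A₁₁` invertible,
`β̂ = (β̂₁ᵀ, 0ᵀ)ᵀ`, `γ̂ = (γ̂₁ᵀ, 0ᵀ)ᵀ`, `β̂₁ = A₁₁⁻¹(v₁ − μ Λ₁₁ sign(γ̂₁))` and
`γ̂₁ = μ Λ₁₁ A₁₁⁻¹ Λ₁₁ sign(β̂₁)` (where `v = U + Aβ̃`), one has
`γ̂ᵀ Λ⁻¹ A β̂ = μ ‖Λβ̂‖₁` and `γ̂ᵀ Λ⁻¹ (U + A(β̃ − β̂)) = μ ‖γ̂‖₁`. -/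
theorem stmt_10 (p s : ℕ) (hs1 : 1 ≤ s) (hsp : s ≤ p)
    (lam : Fin p → ℝ) (hlam : ∀ j, 0 < lam j)
    (μ : ℝ) (hμ : 0 < μ) (U βt : Fin p → ℝ)
    (A : Matrix (Fin p) (Fin p) ℝ) (hAsymm : A.IsSymm)
    (hA11 : IsUnit (A.submatrix (Fin.castLE hsp) (Fin.castLE hsp)).det)
    (β1 γ1 : Fin s → ℝ)
    (hβ1 : β1 = (A.submatrix (Fin.castLE hsp) (Fin.castLE hsp))⁻¹ *ᵥ
      ((fun i => (U + A *ᵥ βt) (Fin.castLE hsp i)) -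
        μ • (Matrix.diagonal (fun i => lam (Fin.castLE hsp i)) *ᵥ
          fun i => Real.sign (γ1 i))))
    (hγ1 : γ1 = μ • ((Matrix.diagonal (fun i => lam (Fin.castLE hsp i)) *
        (A.submatrix (Fin.castLE hsp) (Fin.castLE hsp))⁻¹ *
        Matrix.diagonal (fun i => lam (Fin.castLE hsp i))) *ᵥ
          fun i => Real.sign (β1 i)))
    (βh γh : Fin p → ℝ)
    (hβh : βh = fun j : Fin p => if h : (j : ℕ) < s then β1 ⟨j, h⟩ else 0)
    (hγh : γh = fun j : Fin p => if h : (j : ℕ) < s then γ1 ⟨j, h⟩ else 0) :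
    γh ⬝ᵥ ((Matrix.diagonal fun j => (lam j)⁻¹) *ᵥ (A *ᵥ βh)) =
      μ * ∑ j, |(Matrix.diagonal lam *ᵥ βh) j| ∧
    γh ⬝ᵥ ((Matrix.diagonal fun j => (lam j)⁻¹) *ᵥ (U + A *ᵥ (βt - βh))) =
      μ * ∑ j, |γh j| :=
  stmt_10_general p s hsp lam hlam μ U βt A hAsymm hA11 β1 γ1 hβ1 hγ1 βh γh hβh hγh
end

section
/- Let p ∈ ℕ, let Λ be the p×p diagonal matrix with diagonal entries λ₁,…,λ_p > 0, let μ > 0, let U, β̃ ∈ ℝ^p, and let A be an invertible p×p real matrix. Define K = { β ∈ ℝ^p : ‖Λ⁻¹(U + A(β̃ − β))‖_∞ ≤ μ } and G = { γ ∈ ℝ^p : ‖Λ⁻¹ Aᵀ Λ⁻¹ γ‖_∞ ≤ μ }. Then strong duality holds: inf { ‖Λβ‖₁ : β ∈ K } = sup { μ⁻¹ γᵀ Λ⁻¹ (U + A β̃) − ‖γ‖₁ : γ ∈ G }. -/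
open Matrix

private lemma aux_lin (a b : ℝ) (h : ∀ t : ℝ, 0 < t → a + t * b < 0) : a ≤ 0 ∧ b ≤ 0 := by
  have hb : b ≤ 0 := by
    by_contra hc
    push_neg at hc
    have h1 := h 1 one_pos
    have ha1 : a < 0 := by linarith
    have h2 := h ((-a + 1) / b) (div_pos (by linarith) hc)
    have : ((-a + 1) / b) * b = -a + 1 := by field_simp
    linarith [h2, this.symm ▸ h2]
  constructor
  · by_contra hc
    push_neg at hc
    have h1 := h (a / (|b| + 1)) (by positivity)
    have hb1 : 0 < |b| + 1 := by positivity
    have key : a / (|b| + 1) * b ≥ a / (|b| + 1) * (-(|b|+1)) := by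
      apply mul_le_mul_of_nonneg_left _ (by positivity)
      linarith [neg_abs_le b]
    have : a / (|b| + 1) * (-(|b|+1)) = -a := by field_simp
    rw [this] at key
    linarith
  · exact hb

private lemma aux_unbdd (a b c : ℝ) (hb : b < 0) (h : ∀ t : ℝ, 0 ≤ t → c ≤ a + t * b) :
    False := by
  have h1 := h ((|a| + |c| + 1) / (-b)) (le_of_lt (div_pos (by positivity) (by linarith)))
  have hbne : b ≠ 0 := hb.ne
  have key : ((|a| + |c| + 1) / (-b)) * b = -(|a| + |c| + 1) := by
    rw [div_mul_eq_mul_div, div_neg, mul_div_assoc, div_self hbne, mul_one]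
  rw [key] at h1
  have := le_abs_self a
  have := le_abs_self c
  have := neg_abs_le c
  linarith

private lemma comb_lt {a b s t s' t' : ℝ} (ha : 0 ≤ a) (hb : 0 ≤ b) (hab : a + b = 1)
    (h : s < t) (h' : s' < t') : a * s + b * s' < a * t + b * t' := by
  rcases ha.eq_or_lt with rfl | ha'
  · have hb1 : b = 1 := by linarith
    simp [hb1, h']
  · have h1 : a * s < a * t := mul_lt_mul_of_pos_left h ha'
    have h2 : b * s' ≤ b * t' := mul_le_mul_of_nonneg_left h'.le hb
    linarith

private lemma sum_single_smul (p : ℕ) (u : Fin p → ℝ) :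
    ∑ j, u j • (Pi.single j 1 : Fin p → ℝ) = u := by
  funext k
  simp only [Finset.sum_apply, Pi.smul_apply, smul_eq_mul, Pi.single_apply]
  simp [Finset.sum_ite_eq', mul_comm]

private lemma core_duality (p : ℕ) (μ : ℝ) (hμ : 0 < μ) (v : Fin p → ℝ)
    (N : Matrix (Fin p) (Fin p) ℝ) (hN : IsUnit N) :
    sInf ((fun x => ∑ j, |x j|) '' {x : Fin p → ℝ | ∀ j, |(v - N *ᵥ x) j| ≤ μ}) =
    sSup ((fun γ => μ⁻¹ * (γ ⬝ᵥ v) - ∑ j, |γ j|) ''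
      {γ : Fin p → ℝ | ∀ j, |(Nᵀ *ᵥ γ) j| ≤ μ}) := by
  classical
  set obj : (Fin p → ℝ) → ℝ := fun x => ∑ j, |x j| with hobj
  set K : Set (Fin p → ℝ) := {x | ∀ j, |(v - N *ᵥ x) j| ≤ μ} with hKdef
  set G : Set (Fin p → ℝ) := {γ | ∀ j, |(Nᵀ *ᵥ γ) j| ≤ μ} with hGdef
  set dval : (Fin p → ℝ) → ℝ := fun γ => μ⁻¹ * (γ ⬝ᵥ v) - ∑ j, |γ j| with hdval
  have hNdet : IsUnit N.det := (Matrix.isUnit_iff_isUnit_det N).mp hN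
  have hx₀ : N *ᵥ (N⁻¹ *ᵥ v) = v := by
    rw [Matrix.mulVec_mulVec, Matrix.mul_nonsing_inv _ hNdet, Matrix.one_mulVec]
  have hx₀K : (N⁻¹ *ᵥ v) ∈ K := by
    intro j; simp [hx₀, hμ.le]
  have hPne : ((fun x => ∑ j, |x j|) '' K).Nonempty := ⟨_, Set.mem_image_of_mem _ hx₀K⟩
  have hPbdd : BddBelow ((fun x => ∑ j, |x j|) '' K) := by
    refine ⟨0, ?_⟩
    rintro y ⟨x, -, rfl⟩
    exact Finset.sum_nonneg fun j _ => abs_nonneg _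
  set α := sInf ((fun x => ∑ j, |x j|) '' K) with hα
  have hαle : ∀ x ∈ K, α ≤ obj x := fun x hx => csInf_le hPbdd (Set.mem_image_of_mem _ hx)
  -- weak duality
  have hdot : ∀ (γ x : Fin p → ℝ), γ ⬝ᵥ (N *ᵥ x) = (Nᵀ *ᵥ γ) ⬝ᵥ x := by
    intro γ x
    rw [Matrix.mulVec_transpose, Matrix.dotProduct_mulVec]
  have weak : ∀ γ ∈ G, ∀ x ∈ K, dval γ ≤ obj x := by
    intro γ hγ x hx
    have key : γ ⬝ᵥ v = γ ⬝ᵥ (v - N *ᵥ x) + (Nᵀ *ᵥ γ) ⬝ᵥ x := by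
      rw [← hdot, ← dotProduct_add]
      congr 1
      simp
    have h1 : γ ⬝ᵥ (v - N *ᵥ x) ≤ μ * ∑ j, |γ j| := by
      rw [Finset.mul_sum]
      refine Finset.sum_le_sum fun j _ => ?_
      calc γ j * (v - N *ᵥ x) j ≤ |γ j * (v - N *ᵥ x) j| := le_abs_self _
        _ = |γ j| * |(v - N *ᵥ x) j| := abs_mul _ _
        _ ≤ |γ j| * μ := mul_le_mul_of_nonneg_left (hx j) (abs_nonneg _)
        _ = μ * |γ j| := mul_comm _ _
    have h2 : (Nᵀ *ᵥ γ) ⬝ᵥ x ≤ μ * ∑ j, |x j| := by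
      rw [Finset.mul_sum]
      refine Finset.sum_le_sum fun j _ => ?_
      calc (Nᵀ *ᵥ γ) j * x j ≤ |(Nᵀ *ᵥ γ) j * x j| := le_abs_self _
        _ = |(Nᵀ *ᵥ γ) j| * |x j| := abs_mul _ _
        _ ≤ μ * |x j| := mul_le_mul_of_nonneg_right (hγ j) (abs_nonneg _)
    have hμinv : (0:ℝ) < μ⁻¹ := by positivity
    have h3 : μ⁻¹ * (γ ⬝ᵥ v) ≤ μ⁻¹ * (μ * ∑ j, |γ j| + μ * ∑ j, |x j|) := by
      apply mul_le_mul_of_nonneg_left _ hμinv.le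
      rw [key]; linarith
    have h4 : μ⁻¹ * (μ * ∑ j, |γ j| + μ * ∑ j, |x j|) = (∑ j, |γ j|) + ∑ j, |x j| := by
      field_simp
    simp only [hdval, hobj]
    linarith [h3, h4]
  -- strong duality: construct a dual optimal γ*
  obtain ⟨γs, hγsG, hγsval⟩ : ∃ γ ∈ G, α ≤ dval γ := by
    set S : Set ((Fin p → ℝ) × (Fin p → ℝ) × ℝ) :=
      {q | ∃ x : Fin p → ℝ, (∀ j, (v - N *ᵥ x) j - μ < q.1 j) ∧
        (∀ j, -((v - N *ᵥ x) j) - μ < q.2.1 j) ∧ obj x - α < q.2.2} with hSdef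
    have hSconv : Convex ℝ S := by
      rintro q ⟨x, hq1, hq2, hq3⟩ q' ⟨x', hq1', hq2', hq3'⟩ a b ha hb hab
      have hb' : b = 1 - a := by linarith
      subst hb'
      refine ⟨a • x + (1 - a) • x', fun j => ?_, fun j => ?_, ?_⟩
      · have hm : (N *ᵥ (a • x + (1 - a) • x')) j
            = a * (N *ᵥ x) j + (1 - a) * (N *ᵥ x') j := by
          simp [Matrix.mulVec_add, Matrix.mulVec_smul]
        have h := comb_lt ha hb (by ring) (hq1 j) (hq1' j)
        simp only [Pi.sub_apply] at h ⊢
        simp only [Prod.fst_add, Prod.smul_fst, Pi.add_apply, Pi.smul_apply, smul_eq_mul]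
        rw [hm]
        linarith
      · have hm : (N *ᵥ (a • x + (1 - a) • x')) j
            = a * (N *ᵥ x) j + (1 - a) * (N *ᵥ x') j := by
          simp [Matrix.mulVec_add, Matrix.mulVec_smul]
        have h := comb_lt ha hb (by ring) (hq2 j) (hq2' j)
        simp only [Pi.sub_apply] at h ⊢
        simp only [Prod.snd_add, Prod.smul_snd, Prod.fst_add, Prod.smul_fst,
          Pi.add_apply, Pi.smul_apply, smul_eq_mul]
        rw [hm]
        linarith
      · have hconv : obj (a • x + (1 - a) • x') ≤ a * obj x + (1 - a) * obj x' := by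
          simp only [hobj]
          rw [Finset.mul_sum, Finset.mul_sum, ← Finset.sum_add_distrib]
          refine Finset.sum_le_sum fun j _ => ?_
          simp only [Pi.add_apply, Pi.smul_apply, smul_eq_mul]
          calc |a * x j + (1 - a) * x' j| ≤ |a * x j| + |(1 - a) * x' j| := abs_add_le _ _
            _ = a * |x j| + (1 - a) * |x' j| := by
                rw [abs_mul, abs_mul, abs_of_nonneg ha, abs_of_nonneg hb]
        have h := comb_lt ha hb (by ring) hq3 hq3'
        simp only [Prod.snd_add, Prod.smul_snd, smul_eq_mul]
        linarith
    have hSopen : IsOpen S := by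
      have hrw : S = ⋃ x : Fin p → ℝ,
          ((⋂ j, {q : (Fin p → ℝ) × (Fin p → ℝ) × ℝ | (v - N *ᵥ x) j - μ < q.1 j}) ∩
           ((⋂ j, {q : (Fin p → ℝ) × (Fin p → ℝ) × ℝ | -((v - N *ᵥ x) j) - μ < q.2.1 j}) ∩
            {q : (Fin p → ℝ) × (Fin p → ℝ) × ℝ | obj x - α < q.2.2})) := by
        ext q
        simp only [hSdef, Set.mem_setOf_eq, Set.mem_iUnion, Set.mem_inter_iff, Set.mem_iInter]
      rw [hrw]
      refine isOpen_iUnion fun x => ?_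
      refine IsOpen.inter (isOpen_iInter_of_finite fun j => ?_)
        (IsOpen.inter (isOpen_iInter_of_finite fun j => ?_) ?_)
      · exact isOpen_lt continuous_const ((continuous_apply j).comp continuous_fst)
      · exact isOpen_lt continuous_const
          ((continuous_apply j).comp (continuous_fst.comp continuous_snd))
      · exact isOpen_lt continuous_const (continuous_snd.comp continuous_snd)
    have h0S : (0 : (Fin p → ℝ) × (Fin p → ℝ) × ℝ) ∉ S := by
      rintro ⟨x, h1, h2, h3⟩
      have hxK : x ∈ K := by
        intro j
        have ha1 := h1 j
        have ha2 := h2 j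
        simp only [Prod.fst_zero, Prod.snd_zero, Pi.zero_apply] at ha1 ha2
        rw [abs_le]
        constructor <;> linarith
      have := hαle x hxK
      simp only [Prod.snd_zero] at h3
      linarith
    set q₁ : (Fin p → ℝ) × (Fin p → ℝ) × ℝ :=
      ((0 : Fin p → ℝ), (0 : Fin p → ℝ), obj (N⁻¹ *ᵥ v) - α + 1) with hq₁def
    have hq₁S : q₁ ∈ S := by
      refine ⟨N⁻¹ *ᵥ v, fun j => ?_, fun j => ?_, ?_⟩
      · simp only [hq₁def, Pi.sub_apply, hx₀, Pi.zero_apply]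
        simp only [sub_self]
        linarith
      · simp only [hq₁def, Pi.sub_apply, hx₀, Pi.zero_apply]
        simp only [sub_self]
        linarith
      · simp only [hq₁def]
        linarith
    obtain ⟨f, hf⟩ := geometric_hahn_banach_open_point hSconv hSopen h0S
    have hfS : ∀ q ∈ S, f q < 0 := by
      intro q hq
      have := hf q hq
      rwa [map_zero] at this
    set e1 : Fin p → (Fin p → ℝ) × (Fin p → ℝ) × ℝ :=
      fun j => ((Pi.single j 1 : Fin p → ℝ), 0, 0) with he1
    set e2 : Fin p → (Fin p → ℝ) × (Fin p → ℝ) × ℝ :=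
      fun j => (0, (Pi.single j 1 : Fin p → ℝ), 0) with he2
    set e3 : (Fin p → ℝ) × (Fin p → ℝ) × ℝ := (0, 0, 1) with he3
    have hfst : ∀ g : Fin p → (Fin p → ℝ) × (Fin p → ℝ) × ℝ,
        (∑ j, g j).1 = ∑ j, (g j).1 :=
      fun g => map_sum (AddMonoidHom.fst _ _) g Finset.univ
    have hsnd : ∀ g : Fin p → (Fin p → ℝ) × (Fin p → ℝ) × ℝ,
        (∑ j, g j).2 = ∑ j, (g j).2 :=
      fun g => map_sum (AddMonoidHom.snd _ _) g Finset.univ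
    have hfst2 : ∀ g : Fin p → (Fin p → ℝ) × ℝ, (∑ j, g j).1 = ∑ j, (g j).1 :=
      fun g => map_sum (AddMonoidHom.fst _ _) g Finset.univ
    have hsnd2 : ∀ g : Fin p → (Fin p → ℝ) × ℝ, (∑ j, g j).2 = ∑ j, (g j).2 :=
      fun g => map_sum (AddMonoidHom.snd _ _) g Finset.univ
    have hdec : ∀ q : (Fin p → ℝ) × (Fin p → ℝ) × ℝ,
        f q = ∑ j, q.1 j * f (e1 j) + ∑ j, q.2.1 j * f (e2 j) + q.2.2 * f e3 := by
      intro q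
      have hq : q = (∑ j, q.1 j • e1 j) + (∑ j, q.2.1 j • e2 j) + q.2.2 • e3 := by
        refine Prod.ext ?_ (Prod.ext ?_ ?_)
        · simp only [Prod.fst_add, Prod.smul_fst, hfst, he1, he2, he3, smul_zero,
            Finset.sum_const_zero, add_zero]
          exact (sum_single_smul p q.1).symm
        · simp only [Prod.snd_add, Prod.smul_snd, Prod.fst_add, Prod.smul_fst, hsnd, hfst2,
            he1, he2, he3, smul_zero, Finset.sum_const_zero, add_zero, zero_add]
          exact (sum_single_smul p q.2.1).symm
        · simp only [Prod.snd_add, Prod.smul_snd, hsnd, hsnd2, he1, he2, he3, smul_zero,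
            Finset.sum_const_zero, add_zero, zero_add, smul_eq_mul, mul_one, mul_zero]
      conv_lhs => rw [hq]
      rw [map_add, map_add, map_sum, map_sum, _root_.map_smul, smul_eq_mul]
      simp only [_root_.map_smul, smul_eq_mul]
    have hdir : ∀ d : (Fin p → ℝ) × (Fin p → ℝ) × ℝ, (∀ k, 0 ≤ d.1 k) →
        (∀ k, 0 ≤ d.2.1 k) → 0 ≤ d.2.2 → f d ≤ 0 := by
      intro d hd1 hd2 hd3
      have key : ∀ t : ℝ, 0 < t → f q₁ + t * f d < 0 := by
        intro t ht
        have hmem : q₁ + t • d ∈ S := by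
          obtain ⟨x₁, hx1, hx2, hx3⟩ := hq₁S
          refine ⟨x₁, fun j => ?_, fun j => ?_, ?_⟩
          · have h0 : 0 ≤ t * d.1 j := mul_nonneg ht.le (hd1 j)
            have := hx1 j
            simp only [Prod.fst_add, Pi.add_apply, Prod.smul_fst, Pi.smul_apply,
              smul_eq_mul] at *
            linarith
          · have h0 : 0 ≤ t * d.2.1 j := mul_nonneg ht.le (hd2 j)
            have := hx2 j
            simp only [Prod.snd_add, Prod.fst_add, Pi.add_apply, Prod.smul_snd,
              Prod.smul_fst, Pi.smul_apply, smul_eq_mul] at *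
            linarith
          · have h0 : 0 ≤ t * d.2.2 := mul_nonneg ht.le hd3
            simp only [Prod.snd_add, Prod.smul_snd, smul_eq_mul] at *
            linarith
        have := hfS _ hmem
        rwa [map_add, _root_.map_smul, smul_eq_mul] at this
      exact (aux_lin _ _ key).2
    set cc : Fin p → ℝ := fun j => -(f (e1 j)) with hcc
    set dd : Fin p → ℝ := fun j => -(f (e2 j)) with hdd
    set ee : ℝ := -(f e3) with heedef
    have hsingle_nonneg : ∀ (j k : Fin p), (0:ℝ) ≤ (Pi.single j 1 : Fin p → ℝ) k := by
      intro j k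
      rcases eq_or_ne k j with rfl | hne
      · simp
      · simp [Pi.single_apply, hne]
    have hcc0 : ∀ j, 0 ≤ cc j := by
      intro j
      have := hdir (e1 j) (fun k => by simp only [he1]; exact hsingle_nonneg j k)
        (fun k => by simp [he1]) (by simp [he1])
      simp only [hcc]
      linarith
    have hdd0 : ∀ j, 0 ≤ dd j := by
      intro j
      have := hdir (e2 j) (fun k => by simp [he2]) 
        (fun k => by simp only [he2]; exact hsingle_nonneg j k) (by simp [he2])
      simp only [hdd]
      linarith
    have hee0 : 0 ≤ ee := by
      have := hdir e3 (fun k => by simp [he3]) (fun k => by simp [he3]) (by simp [he3])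
      simp only [heedef]
      linarith
    have hmain : ∀ x : Fin p → ℝ, 0 ≤ ∑ j, ((v - N *ᵥ x) j - μ) * cc j +
        ∑ j, (-((v - N *ᵥ x) j) - μ) * dd j + (obj x - α) * ee := by
      intro x
      set q₀ : (Fin p → ℝ) × (Fin p → ℝ) × ℝ :=
        (fun j => (v - N *ᵥ x) j - μ, fun j => -((v - N *ᵥ x) j) - μ, obj x - α) with hq₀
      have hfq₀ : f q₀ ≤ 0 := by
        have key : ∀ t : ℝ, 0 < t →
            f q₀ + t * f (((fun _ => 1 : Fin p → ℝ), (fun _ => 1 : Fin p → ℝ), (1:ℝ))) < 0 := by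
          intro t ht
          have hmem : q₀ + t • (((fun _ => 1 : Fin p → ℝ), (fun _ => 1 : Fin p → ℝ), (1:ℝ))) ∈ S := by
            refine ⟨x, fun j => ?_, fun j => ?_, ?_⟩
            · simp only [hq₀, Prod.fst_add, Pi.add_apply, Prod.smul_fst, Pi.smul_apply,
                smul_eq_mul, mul_one]
              linarith
            · simp only [hq₀, Prod.snd_add, Prod.fst_add, Pi.add_apply, Prod.smul_snd,
                Prod.smul_fst, Pi.smul_apply, smul_eq_mul, mul_one]
              linarith
            · simp only [hq₀, Prod.snd_add, Prod.smul_snd, smul_eq_mul, mul_one]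
              linarith
          have := hfS _ hmem
          rwa [map_add, _root_.map_smul, smul_eq_mul] at this
        exact (aux_lin _ _ key).1
      rw [hdec q₀] at hfq₀
      simp only [hq₀] at hfq₀
      have hT1 : ∑ j, ((v - N *ᵥ x) j - μ) * cc j
          = -∑ j, ((v - N *ᵥ x) j - μ) * f (e1 j) := by
        rw [← Finset.sum_neg_distrib]
        exact Finset.sum_congr rfl fun j _ => by simp only [hcc]; ring
      have hT2 : ∑ j, (-((v - N *ᵥ x) j) - μ) * dd j
          = -∑ j, (-((v - N *ᵥ x) j) - μ) * f (e2 j) := by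
        rw [← Finset.sum_neg_distrib]
        exact Finset.sum_congr rfl fun j _ => by simp only [hdd]; ring
      have hT3 : (obj x - α) * ee = -((obj x - α) * f e3) := by
        simp only [heedef]; ring
      rw [hT1, hT2, hT3]
      linarith
    have heepos : 0 < ee := by
      rcases hee0.eq_or_lt with heq | h
      swap
      · exact h
      exfalso
      have h1 := hmain (N⁻¹ *ᵥ v)
      have hz : v - N *ᵥ (N⁻¹ *ᵥ v) = 0 := by rw [hx₀]; simp
      rw [hz, ← heq] at h1
      simp only [Pi.zero_apply, zero_sub, neg_zero, mul_zero, add_zero] at h1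
      have e1eq : ∑ j, -μ * cc j = -(μ * ∑ j, cc j) := by
        rw [Finset.mul_sum, ← Finset.sum_neg_distrib]
        exact Finset.sum_congr rfl fun j _ => by ring
      have e2eq : ∑ j, (0 - μ) * dd j = -(μ * ∑ j, dd j) := by
        rw [Finset.mul_sum, ← Finset.sum_neg_distrib]
        exact Finset.sum_congr rfl fun j _ => by ring
      have e3eq : ∑ x : Fin p, -μ * dd x = -(μ * ∑ j, dd j) := by
        rw [Finset.mul_sum, ← Finset.sum_neg_distrib]
        exact Finset.sum_congr rfl fun j _ => by ring
      rw [e1eq] at h1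
      rw [e3eq] at h1
      have hccs : 0 ≤ ∑ j, cc j := Finset.sum_nonneg fun j _ => hcc0 j
      have hdds : 0 ≤ ∑ j, dd j := Finset.sum_nonneg fun j _ => hdd0 j
      have hmc : 0 ≤ μ * ∑ j, cc j := mul_nonneg hμ.le hccs
      have hmd : 0 ≤ μ * ∑ j, dd j := mul_nonneg hμ.le hdds
      have hsum0 : ∑ j, cc j = 0 ∧ ∑ j, dd j = 0 := by
        have hc1 : μ * ∑ j, cc j = 0 := by linarith
        have hd1 : μ * ∑ j, dd j = 0 := by linarith
        constructor
        · rcases mul_eq_zero.mp hc1 with h | h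
          · exact absurd h hμ.ne'
          · exact h
        · rcases mul_eq_zero.mp hd1 with h | h
          · exact absurd h hμ.ne'
          · exact h
      have hccz : ∀ j ∈ Finset.univ, cc j = 0 :=
        (Finset.sum_eq_zero_iff_of_nonneg (fun j _ => hcc0 j)).mp hsum0.1
      have hddz : ∀ j ∈ Finset.univ, dd j = 0 :=
        (Finset.sum_eq_zero_iff_of_nonneg (fun j _ => hdd0 j)).mp hsum0.2
      have hfq₁ : f q₁ = 0 := by
        rw [hdec q₁]
        have hc : ∀ j, f (e1 j) = 0 := by
          intro j
          have := hccz j (Finset.mem_univ j)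
          simp only [hcc] at this
          linarith
        have hd : ∀ j, f (e2 j) = 0 := by
          intro j
          have := hddz j (Finset.mem_univ j)
          simp only [hdd] at this
          linarith
        have he : f e3 = 0 := by
          simp only [heedef] at heq
          linarith
        simp [hc, hd, he]
      have := hfS q₁ hq₁S
      rw [hfq₁] at this
      exact lt_irrefl 0 this
    -- normalized multipliers
    set δ : Fin p → ℝ := fun j => (cc j - dd j) / ee with hδ
    have hstar : ∀ x : Fin p → ℝ,
        α + μ * ∑ j, |δ j| ≤ obj x + ∑ j, δ j * (v - N *ᵥ x) j := by
      intro x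
      have h1 := hmain x
      have hT1 : ∑ j, ((v - N *ᵥ x) j - μ) * cc j
          = ∑ j, (v - N *ᵥ x) j * cc j - μ * ∑ j, cc j := by
        rw [Finset.mul_sum, ← Finset.sum_sub_distrib]
        exact Finset.sum_congr rfl fun j _ => by ring
      have hT2 : ∑ j, (-((v - N *ᵥ x) j) - μ) * dd j
          = -∑ j, (v - N *ᵥ x) j * dd j - μ * ∑ j, dd j := by
        rw [Finset.mul_sum, ← Finset.sum_neg_distrib, ← Finset.sum_sub_distrib]
        exact Finset.sum_congr rfl fun j _ => by ring
      rw [hT1, hT2] at h1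
      -- h1 : 0 ≤ Σ w cc − μ Σ cc − Σ w dd − μ Σ dd + (obj x − α) ee
      have hdelmul : ∀ j, ee * (δ j * (v - N *ᵥ x) j)
          = (v - N *ᵥ x) j * cc j - (v - N *ᵥ x) j * dd j := by
        intro j
        simp only [hδ]
        field_simp
      have habs : ∀ j, ee * |δ j| ≤ cc j + dd j := by
        intro j
        simp only [hδ, abs_div, abs_of_pos heepos]
        rw [mul_comm, div_mul_cancel₀ _ heepos.ne']
        exact abs_le.mpr ⟨by linarith [hcc0 j, hdd0 j], by linarith [hcc0 j, hdd0 j]⟩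
      have hsum1 : ee * ∑ j, δ j * (v - N *ᵥ x) j
          = ∑ j, (v - N *ᵥ x) j * cc j - ∑ j, (v - N *ᵥ x) j * dd j := by
        rw [Finset.mul_sum, ← Finset.sum_sub_distrib]
        exact Finset.sum_congr rfl fun j _ => by rw [hdelmul j]
      have hsum2 : ee * ∑ j, |δ j| ≤ ∑ j, cc j + ∑ j, dd j := by
        rw [Finset.mul_sum, ← Finset.sum_add_distrib]
        exact Finset.sum_le_sum fun j _ => habs j
      have final : ee * (α + μ * ∑ j, |δ j|) ≤ ee * (obj x + ∑ j, δ j * (v - N *ᵥ x) j) := by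
        have h2 : μ * (ee * ∑ j, |δ j|) ≤ μ * (∑ j, cc j + ∑ j, dd j) :=
          mul_le_mul_of_nonneg_left hsum2 hμ.le
        nlinarith [h1, h2, hsum1]
      exact le_of_mul_le_mul_left final heepos
    have hfeas : ∀ k, |(Nᵀ *ᵥ δ) k| ≤ 1 := by
      intro k
      by_contra hcon
      push_neg at hcon
      set s : ℝ := if 0 ≤ (Nᵀ *ᵥ δ) k then 1 else -1 with hs
      have hsabs : |s| = 1 := by
        simp only [hs]; split_ifs <;> norm_num
      have hms : (Nᵀ *ᵥ δ) k * s = |(Nᵀ *ᵥ δ) k| := by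
        simp only [hs]; split_ifs with h
        · rw [mul_one, abs_of_nonneg h]
        · rw [abs_of_neg (lt_of_not_ge h)]; ring
      have happ : ∀ t : ℝ, 0 ≤ t →
          α + μ * ∑ j, |δ j| ≤ (∑ j, δ j * v j) + t * (1 - |(Nᵀ *ᵥ δ) k|) := by
        intro t ht
        set xt : Fin p → ℝ := t • (Pi.single k s : Fin p → ℝ) with hxt
        have h := hstar xt
        have hobjx : obj xt = t := by
          simp only [hobj]
          have hterm : ∀ j, |xt j| = if j = k then t else 0 := by
            intro j
            rcases eq_or_ne j k with rfl | hne
            · rw [if_pos rfl]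
              simp only [hxt, Pi.smul_apply, Pi.single_eq_same, smul_eq_mul]
              rw [abs_mul, hsabs, mul_one, abs_of_nonneg ht]
            · rw [if_neg hne]
              simp only [hxt, Pi.smul_apply, smul_eq_mul, Pi.single_eq_of_ne hne]
              simp
          rw [Finset.sum_congr rfl fun j _ => hterm j]
          simp
        have hdsum : ∑ j, δ j * (v - N *ᵥ xt) j
            = (∑ j, δ j * v j) - t * |(Nᵀ *ᵥ δ) k| := by
          have h1 : ∑ j, δ j * (v - N *ᵥ xt) j
              = ∑ j, δ j * v j - δ ⬝ᵥ (N *ᵥ xt) := by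
            simp only [dotProduct]
            rw [← Finset.sum_sub_distrib]
            refine Finset.sum_congr rfl fun j _ => ?_
            simp only [Pi.sub_apply]
            ring
          rw [h1, hdot]
          have h2 : (Nᵀ *ᵥ δ) ⬝ᵥ xt = t * ((Nᵀ *ᵥ δ) k * s) := by
            simp only [hxt, dotProduct, Pi.smul_apply, smul_eq_mul]
            rw [Finset.sum_eq_single k]
            · rw [Pi.single_eq_same]; ring
            · intro j _ hne
              rw [Pi.single_eq_of_ne hne]
              ring
            · intro habs'
              exact absurd (Finset.mem_univ k) habs'
          rw [h2, hms]
        rw [hobjx, hdsum] at h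
        linarith
      exact aux_unbdd (∑ j, δ j * v j) (1 - |(Nᵀ *ᵥ δ) k|) (α + μ * ∑ j, |δ j|)
        (by linarith) happ
    refine ⟨fun j => μ * δ j, ?_, ?_⟩
    · intro j
      have hrw : (Nᵀ *ᵥ fun i => μ * δ i) j = μ * (Nᵀ *ᵥ δ) j := by
        have hfun : (fun i => μ * δ i) = μ • δ := rfl
        rw [hfun, Matrix.mulVec_smul]
        simp
      rw [hrw, abs_mul, abs_of_pos hμ]
      calc μ * |(Nᵀ *ᵥ δ) j| ≤ μ * 1 := mul_le_mul_of_nonneg_left (hfeas j) hμ.le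
        _ = μ := mul_one μ
    · have h0 := hstar 0
      have hz1 : obj (0 : Fin p → ℝ) = 0 := by simp [hobj]
      have hz2 : v - N *ᵥ (0 : Fin p → ℝ) = v := by simp
      rw [hz1, hz2, zero_add] at h0
      simp only [hdval]
      have hd1 : (fun i => μ * δ i) ⬝ᵥ v = μ * ∑ j, δ j * v j := by
        simp only [dotProduct]
        rw [Finset.mul_sum]
        exact Finset.sum_congr rfl fun j _ => by ring
      have hd2 : ∑ j, |μ * δ j| = μ * ∑ j, |δ j| := by
        rw [Finset.mul_sum]
        exact Finset.sum_congr rfl fun j _ => by rw [abs_mul, abs_of_pos hμ]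
      rw [hd1, hd2, ← mul_assoc, inv_mul_cancel₀ hμ.ne', one_mul]
      have hsnn : 0 ≤ μ * ∑ j, |δ j| :=
        mul_nonneg hμ.le (Finset.sum_nonneg fun j _ => abs_nonneg _)
      linarith
  have hGbddAbove : BddAbove ((fun γ => μ⁻¹ * (γ ⬝ᵥ v) - ∑ j, |γ j|) '' G) := by
    refine ⟨obj (N⁻¹ *ᵥ v), ?_⟩
    rintro y ⟨γ, hγ, rfl⟩
    exact weak γ hγ _ hx₀K
  apply le_antisymm
  · exact le_trans hγsval (le_csSup hGbddAbove (Set.mem_image_of_mem _ hγsG))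
  · refine csSup_le ⟨_, Set.mem_image_of_mem _ (by intro j; simp [hμ.le] : (0:Fin p → ℝ) ∈ G)⟩ ?_
    rintro y ⟨γ, hγ, rfl⟩
    exact le_csInf hPne (by rintro z ⟨x, hx, rfl⟩; exact weak γ hγ x hx)

/-- Strong duality for the ALDS linear program (Lemma C.1): with `Λ = diag(λ₁,…,λ_p)`,
`λ_j > 0`, `μ > 0` and `A` invertible,
`inf {‖Λβ‖₁ : ‖Λ⁻¹(U + A(β̃ − β))‖_∞ ≤ μ}
  = sup {μ⁻¹ γᵀΛ⁻¹(U + Aβ̃) − ‖γ‖₁ : ‖Λ⁻¹AᵀΛ⁻¹γ‖_∞ ≤ μ}`. -/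
theorem stmt_12 (p : ℕ) (lam : Fin p → ℝ) (hlam : ∀ j, 0 < lam j)
    (μ : ℝ) (hμ : 0 < μ) (U βt : Fin p → ℝ)
    (A : Matrix (Fin p) (Fin p) ℝ) (hA : IsUnit A) :
    sInf ((fun β => ∑ j, |(Matrix.diagonal lam *ᵥ β) j|) ''
        {β : Fin p → ℝ |
          ∀ j, |((Matrix.diagonal fun j => (lam j)⁻¹) *ᵥ (U + A *ᵥ (βt - β))) j| ≤ μ}) =
    sSup ((fun γ => μ⁻¹ * (γ ⬝ᵥ ((Matrix.diagonal fun j => (lam j)⁻¹) *ᵥ (U + A *ᵥ βt)))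
          - ∑ j, |γ j|) ''
        {γ : Fin p → ℝ |
          ∀ j, |(((Matrix.diagonal fun j => (lam j)⁻¹) * Aᵀ *
            (Matrix.diagonal fun j => (lam j)⁻¹)) *ᵥ γ) j| ≤ μ}) := by
  classical
  set Li : Matrix (Fin p) (Fin p) ℝ := Matrix.diagonal fun j => (lam j)⁻¹ with hLi
  set La : Matrix (Fin p) (Fin p) ℝ := Matrix.diagonal lam with hLa
  set v : Fin p → ℝ := Li *ᵥ (U + A *ᵥ βt) with hv
  set N : Matrix (Fin p) (Fin p) ℝ := Li * A * Li with hNdef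
  have hlamne : ∀ j, lam j ≠ 0 := fun j => (hlam j).ne'
  have hLiLa : Li * La = 1 := by
    rw [hLi, hLa, Matrix.diagonal_mul_diagonal, ← Matrix.diagonal_one]
    exact congrArg Matrix.diagonal (funext fun j => inv_mul_cancel₀ (hlamne j))
  have hLaLi : La * Li = 1 := by
    rw [hLi, hLa, Matrix.diagonal_mul_diagonal, ← Matrix.diagonal_one]
    exact congrArg Matrix.diagonal (funext fun j => mul_inv_cancel₀ (hlamne j))
  have hLiu : IsUnit Li := by
    rw [Matrix.isUnit_iff_isUnit_det, hLi, Matrix.det_diagonal, isUnit_iff_ne_zero]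
    exact Finset.prod_ne_zero_iff.mpr fun j _ => inv_ne_zero (hlamne j)
  have hNunit : IsUnit N := (hLiu.mul hA).mul hLiu
  have hprimset : ∀ β : Fin p → ℝ,
      Li *ᵥ (U + A *ᵥ (βt - β)) = v - N *ᵥ (La *ᵥ β) := by
    intro β
    have h1 : U + A *ᵥ (βt - β) = (U + A *ᵥ βt) - A *ᵥ β := by
      rw [Matrix.mulVec_sub]
      abel
    have h2 : N *ᵥ (La *ᵥ β) = (Li * A) *ᵥ β := by
      rw [Matrix.mulVec_mulVec, hNdef, Matrix.mul_assoc (Li * A), hLiLa, Matrix.mul_one]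
    rw [h1, h2, Matrix.mulVec_sub, hv, Matrix.mulVec_mulVec]
  have himg1 : (fun β => ∑ j, |(La *ᵥ β) j|) ''
        {β : Fin p → ℝ | ∀ j, |(Li *ᵥ (U + A *ᵥ (βt - β))) j| ≤ μ}
      = (fun x => ∑ j, |x j|) '' {x : Fin p → ℝ | ∀ j, |(v - N *ᵥ x) j| ≤ μ} := by
    ext y
    constructor
    · rintro ⟨β, hβ, rfl⟩
      exact ⟨La *ᵥ β, fun j => by rw [← hprimset β]; exact hβ j, rfl⟩
    · rintro ⟨x, hx, rfl⟩
      have hLaLix : La *ᵥ (Li *ᵥ x) = x := by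
        rw [Matrix.mulVec_mulVec, hLaLi, Matrix.one_mulVec]
      refine ⟨Li *ᵥ x, fun j => ?_, ?_⟩
      · rw [hprimset, hLaLix]
        exact hx j
      · simp only [hLaLix]
  have hdualmat : Li * Aᵀ * Li = Nᵀ := by
    rw [hNdef, Matrix.transpose_mul, Matrix.transpose_mul, Matrix.diagonal_transpose,
      Matrix.mul_assoc]
  rw [himg1, hdualmat]
  exact core_duality p μ hμ v N hNunit
end
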